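/- Let n, N ∈ ℕ (n, N ≥ 1) and p ≥ 1 a real number. Then ∫_{n + N^{1/p}}^{n + N} 1/(k · ln k) dk ≤ ln p. -/

import Mathlib

noncomputable section

theorem statement7 (n N : ℕ) (hn : 1 ≤ n) (hN : 1 ≤ N) (p : ℝ) (hp : 1 ≤ p) :
    ∫ k in ((n : ℝ) + (N : ℝ) ^ (1/p))..((n : ℝ) + (N : ℝ)), 1 / (k * Real.log k) ≤
      Real.log p := by
  have hp0 : (0:ℝ) < p := lt_of_lt_of_le one_pos hp
  set a : ℝ := (n:ℝ) + (N:ℝ) ^ (1/p) with ha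
  set b : ℝ := (n:ℝ) + (N:ℝ) with hb
  have hN1 : (1:ℝ) ≤ (N:ℝ) := by exact_mod_cast hN
  have hn1 : (1:ℝ) ≤ (n:ℝ) := by exact_mod_cast hn
  have hr1 : (1:ℝ) ≤ (N:ℝ) ^ (1/p) := by
    calc (1:ℝ) = (1:ℝ) ^ (1/p) := (Real.one_rpow _).symm
    _ ≤ (N:ℝ) ^ (1/p) := Real.rpow_le_rpow zero_le_one hN1 (by positivity)
  have ha2 : (2:ℝ) ≤ a := by
    rw [ha]; linarith
  have hab : a ≤ b := by
    have h1 : (1:ℝ)/p ≤ 1 := by rw [div_le_one hp0]; exact hp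
    have := Real.rpow_le_rpow_of_exponent_le hN1 h1
    rw [Real.rpow_one] at this
    simpa [ha, hb] using add_le_add_left this (n:ℝ)
  have hb2 : (2:ℝ) ≤ b := le_trans ha2 hab
  have key : ∀ x ∈ Set.uIcc a b,
      HasDerivAt (fun y => Real.log (Real.log y)) (1/(x * Real.log x)) x := by
    intro x hx
    rw [Set.uIcc_of_le hab] at hx
    have hx2 : (2:ℝ) ≤ x := le_trans ha2 hx.1
    have hx0 : x ≠ 0 := by linarith
    have hlx : Real.log x ≠ 0 := ne_of_gt (Real.log_pos (by linarith))
    have hd := (Real.hasDerivAt_log hlx).comp x (Real.hasDerivAt_log hx0)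
    rw [show 1/(x * Real.log x) = (Real.log x)⁻¹ * x⁻¹ by rw [one_div, mul_inv, mul_comm]]
    exact hd
  have hcont : ContinuousOn (fun x => 1/(x * Real.log x)) (Set.uIcc a b) := by
    intro x hx
    rw [Set.uIcc_of_le hab] at hx
    have hx2 : (2:ℝ) ≤ x := le_trans ha2 hx.1
    have hx0 : x ≠ 0 := by linarith
    have hlx : Real.log x ≠ 0 := ne_of_gt (Real.log_pos (by linarith))
    exact (continuousAt_const.div (continuousAt_id.mul (Real.continuousAt_log hx0))
      (mul_ne_zero hx0 hlx)).continuousWithinAt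
  have hint : IntervalIntegrable (fun x => 1/(x * Real.log x)) MeasureTheory.volume a b :=
    hcont.intervalIntegrable
  rw [intervalIntegral.integral_eq_sub_of_hasDerivAt key hint]
  have hla : 0 < Real.log a := Real.log_pos (by linarith)
  have hlb : 0 < Real.log b := Real.log_pos (by linarith)
  have hba : b ≤ a ^ p := by
    have hadd : ∀ x y : ℝ, 0 ≤ x → 0 ≤ y → x^p + y^p ≤ (x+y)^p := by
      intro x y hx hy
      have h := NNReal.add_rpow_le_rpow_add x.toNNReal y.toNNReal hp
      rw [← Real.toNNReal_add hx hy] at h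
      have h2 := NNReal.coe_le_coe.2 h
      simpa [NNReal.coe_rpow, Real.coe_toNNReal x hx, Real.coe_toNNReal y hy,
        Real.coe_toNNReal _ (add_nonneg hx hy)] using h2
    have h1 : (n:ℝ)^p + ((N:ℝ)^(1/p))^p ≤ a ^ p :=
      hadd _ _ (by positivity) (by positivity)
    have h2 : ((N:ℝ)^(1/p))^p = (N:ℝ) := by
      rw [← Real.rpow_mul (by positivity), one_div_mul_cancel hp0.ne', Real.rpow_one]
    have h3 : (n:ℝ) ≤ (n:ℝ)^p := by
      have := Real.rpow_le_rpow_of_exponent_le hn1 hp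
      rwa [Real.rpow_one] at this
    rw [h2] at h1
    linarith
  have hlog : Real.log b ≤ p * Real.log a := by
    calc Real.log b ≤ Real.log (a ^ p) := Real.log_le_log (by linarith) hba
    _ = p * Real.log a := Real.log_rpow (by linarith) p
  have hfin : Real.log (Real.log b) ≤ Real.log p + Real.log (Real.log a) := by
    calc Real.log (Real.log b) ≤ Real.log (p * Real.log a) := Real.log_le_log hlb hlog
    _ = Real.log p + Real.log (Real.log a) := Real.log_mul hp0.ne' hla.ne'
  linarith

end
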